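/- arXiv:1806.09567 — 3 statements merged into one kernel-verified Lean document; each statement's English description precedes it below -/
import Mathlib

section
/- Let R be a commutative ring, B an R-module, and x₁,…,x_d ∈ R a regular sequence on B. Then for every integer t ≥ 1, the element (x₁x₂⋯x_d)^{t−1} does not lie in the submodule (x₁^t,…,x_d^t)B. Equivalently, the Čech/local cohomology class [1/(x₁⋯x_d)] is nonzero in the top local cohomology of B with respect to (x₁,…,x_d). -/
/-!
Induct on the length of the sequence, relative to a base submodule `N` that absorbs the elements
already processed. For a sequence `a, x₂, …, x_d` regular modulo `N`, the sequence
`a^{t+1}, x₂, …, x_d` is again regular (regularity modulo `N + a^{t+1}M` is assembled from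
regularity modulo `N + a^t M` and `N + aM`, as in `0 → M/a^t M → M/a^{t+1} M → M/aM → 0`), so
the induction hypothesis turns `(a x₂ ⋯ x_d)^t m ∈ N + (a^{t+1}, x₂^{t+1}, …)M` into
`a^t m ∈ N + (a^{t+1}, x₂, …, x_d)M`. Since the head `a` is regular modulo `N + (x₂, …, x_d)M`,
the factor `a^t` cancels, leaving `m ∈ N + (a, x₂, …, x_d)M`. For `m = 1` this would make the
sequence generate the unit ideal.
-/

open Ideal Pointwise

section

variable {R M : Type*} [CommRing R] [AddCommGroup M] [Module R M]

namespace Submodule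

theorem mem_sup_span_singleton_smul_top_iff {K : Submodule R M} {r : R} {m : M} :
    m ∈ K ⊔ Ideal.span {r} • ⊤ ↔ ∃ y : M, m - r • y ∈ K := by
  simp only [mem_sup, ideal_span_singleton_smul, mem_smul_pointwise_iff_exists, mem_top, true_and]
  constructor
  · rintro ⟨k, hk, _, ⟨y, rfl⟩, rfl⟩
    exact ⟨y, by simpa using hk⟩
  · rintro ⟨y, hy⟩
    exact ⟨_, hy, _, ⟨y, rfl⟩, sub_add_cancel m _⟩

theorem sup_ofList_cons_smul_top (N : Submodule R M) (a : R) (l : List R) :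
    N ⊔ Ideal.ofList (a :: l) • ⊤ = N ⊔ Ideal.span {a} • ⊤ ⊔ Ideal.ofList l • ⊤ := by
  rw [ofList_cons, sup_smul, sup_assoc]

end Submodule

open Submodule

namespace IsSMulRegular

variable {K : Submodule R M}

theorem mem_sup_span_singleton_smul_top_of_smul_mem {s r : R}
    (hs : IsSMulRegular (M ⧸ K) s) {m : M} (hm : s • m ∈ K ⊔ Ideal.span {s * r} • ⊤) :
    m ∈ K ⊔ Ideal.span {r} • ⊤ := by
  rw [isSMulRegular_quotient_iff_mem_of_smul_mem] at hs
  obtain ⟨y, hy⟩ := mem_sup_span_singleton_smul_top_iff.mp hm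
  refine mem_sup_span_singleton_smul_top_iff.mpr ⟨y, hs _ ?_⟩
  rwa [smul_sub, smul_smul]

theorem quotient_sup_span_singleton_smul_top_swap {a c : R}
    (ha : IsSMulRegular (M ⧸ K) a) (hc : IsSMulRegular (M ⧸ (K ⊔ Ideal.span {a} • ⊤)) c) :
    IsSMulRegular (M ⧸ (K ⊔ Ideal.span {c} • ⊤)) a := by
  rw [isSMulRegular_quotient_iff_mem_of_smul_mem] at ha hc ⊢
  intro m hm
  obtain ⟨n, hn⟩ := mem_sup_span_singleton_smul_top_iff.mp hm
  have hcn : c • n ∈ K ⊔ Ideal.span {a} • ⊤ :=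
    mem_sup_span_singleton_smul_top_iff.mpr ⟨m, by simpa using K.neg_mem hn⟩
  obtain ⟨d, hd⟩ := mem_sup_span_singleton_smul_top_iff.mp (hc n hcn)
  refine mem_sup_span_singleton_smul_top_iff.mpr ⟨d, ha _ ?_⟩
  have : a • (m - c • d) = (a • m - c • n) + c • (n - a • d) := by module
  rw [this]
  exact K.add_mem hn (K.smul_mem c hd)

theorem quotient_sup_span_singleton_mul_smul_top {s r e : R}
    (hs : IsSMulRegular (M ⧸ K) s) (hes : IsSMulRegular (M ⧸ (K ⊔ Ideal.span {s} • ⊤)) e)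
    (her : IsSMulRegular (M ⧸ (K ⊔ Ideal.span {r} • ⊤)) e) :
    IsSMulRegular (M ⧸ (K ⊔ Ideal.span {s * r} • ⊤)) e := by
  rw [isSMulRegular_quotient_iff_mem_of_smul_mem] at hes her ⊢
  intro b hb
  obtain ⟨y, hy⟩ := mem_sup_span_singleton_smul_top_iff.mp hb
  have hbs : e • b ∈ K ⊔ Ideal.span {s} • ⊤ :=
    mem_sup_span_singleton_smul_top_iff.mpr ⟨r • y, by rwa [smul_smul]⟩
  obtain ⟨u, hu⟩ := mem_sup_span_singleton_smul_top_iff.mp (hes b hbs)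
  have heu : s • (e • u) ∈ K ⊔ Ideal.span {s * r} • ⊤ := by
    refine mem_sup_span_singleton_smul_top_iff.mpr ⟨y, ?_⟩
    have : s • (e • u) - (s * r) • y = (e • b - (s * r) • y) - e • (b - s • u) := by module
    rw [this]
    exact K.sub_mem hy (K.smul_mem e hu)
  obtain ⟨v, hv⟩ := mem_sup_span_singleton_smul_top_iff.mp
    (her u (hs.mem_sup_span_singleton_smul_top_of_smul_mem heu))
  refine mem_sup_span_singleton_smul_top_iff.mpr ⟨v, ?_⟩
  have : b - (s * r) • v = (b - s • u) + s • (u - r • v) := by module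
  rw [this]
  exact K.add_mem hu (K.smul_mem s hv)

end IsSMulRegular

/-- `rs` is weakly regular on `M ⧸ N`, phrased inside `M` so that the base `N` can absorb
the elements of the sequence as they are peeled off. -/
def IsWeaklyRegularModulo (N : Submodule R M) (rs : List R) : Prop :=
  ∀ i (h : i < rs.length), IsSMulRegular (M ⧸ (N ⊔ Ideal.ofList (rs.take i) • ⊤)) rs[i]

theorem isWeaklyRegularModulo_bot_iff {rs : List R} :
    IsWeaklyRegularModulo (⊥ : Submodule R M) rs ↔ RingTheory.Sequence.IsWeaklyRegular M rs := by
  rw [IsWeaklyRegularModulo, RingTheory.Sequence.isWeaklyRegular_iff]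
  exact forall₂_congr fun i _ => by rw [bot_sup_eq]

theorem isWeaklyRegularModulo_nil (N : Submodule R M) : IsWeaklyRegularModulo N [] :=
  fun _ h => absurd h (Nat.not_lt_zero _)

theorem isWeaklyRegularModulo_top (rs : List R) : IsWeaklyRegularModulo (⊤ : Submodule R M) rs :=
  fun _ _ => (isSMulRegular_quotient_iff_mem_of_smul_mem _ _).mpr fun _ _ => by simp

theorem isWeaklyRegularModulo_cons_iff {N : Submodule R M} {a : R} {l : List R} :
    IsWeaklyRegularModulo N (a :: l) ↔
      IsSMulRegular (M ⧸ N) a ∧ IsWeaklyRegularModulo (N ⊔ Ideal.span {a} • ⊤) l := by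
  simp only [IsWeaklyRegularModulo, List.length_cons]
  have h₀ : N ⊔ Ideal.ofList ((a :: l).take 0) • ⊤ = N := by simp
  have hsucc (i : ℕ) : N ⊔ Ideal.ofList ((a :: l).take (i + 1)) • ⊤ =
      N ⊔ Ideal.span {a} • ⊤ ⊔ Ideal.ofList (l.take i) • ⊤ := by
    rw [List.take_succ_cons, sup_ofList_cons_smul_top]
  constructor
  · intro h
    refine ⟨?_, fun i hi => ?_⟩
    · have ha := h 0 (Nat.succ_pos _)
      rwa [h₀] at ha
    · have hi := h (i + 1) (Nat.succ_lt_succ hi)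
      rwa [hsucc] at hi
  · rintro ⟨ha, hl⟩ (_ | i) hi
    · rw [h₀]; exact ha
    · rw [hsucc]; exact hl i (Nat.lt_of_succ_lt_succ hi)

theorem isWeaklyRegularModulo_append_iff {N : Submodule R M} {l₁ l₂ : List R} :
    IsWeaklyRegularModulo N (l₁ ++ l₂) ↔
      IsWeaklyRegularModulo N l₁ ∧ IsWeaklyRegularModulo (N ⊔ Ideal.ofList l₁ • ⊤) l₂ := by
  induction l₁ generalizing N with
  | nil => simp [isWeaklyRegularModulo_nil]
  | cons a l₁ ih =>
    rw [List.cons_append, isWeaklyRegularModulo_cons_iff, isWeaklyRegularModulo_cons_iff, ih,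
      sup_ofList_cons_smul_top, and_assoc]

namespace IsWeaklyRegularModulo

variable {N : Submodule R M}

/-- Regular sequences cannot be permuted in general; here the head is moved past the tail one
element at a time, each step being `IsSMulRegular.quotient_sup_span_singleton_smul_top_swap`. -/
theorem isSMulRegular_quotient_sup_head {a : R} {l : List R}
    (h : IsWeaklyRegularModulo N (a :: l)) :
    IsSMulRegular (M ⧸ (N ⊔ Ideal.ofList l • ⊤)) a := by
  induction l using List.reverseRecOn with
  | nil =>
    rw [ofList_nil, Submodule.bot_smul, sup_bot_eq]
    exact (isWeaklyRegularModulo_cons_iff.mp h).1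
  | append_singleton l c ih =>
    rw [← List.cons_append, isWeaklyRegularModulo_append_iff] at h
    have hc := (isWeaklyRegularModulo_cons_iff.mp h.2).1
    rw [sup_ofList_cons_smul_top, sup_right_comm] at hc
    rw [ofList_append, ofList_singleton, Submodule.sup_smul, ← sup_assoc]
    exact (ih h.1).quotient_sup_span_singleton_smul_top_swap hc

theorem pow_head {a : R} {l : List R} (h : IsWeaklyRegularModulo N (a :: l)) (t : ℕ) :
    IsWeaklyRegularModulo N (a ^ t :: l) := by
  rw [isWeaklyRegularModulo_cons_iff] at h ⊢
  refine ⟨h.1.pow t, ?_⟩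
  induction t with
  | zero =>
    rw [pow_zero, span_singleton_one, Submodule.top_smul, sup_top_eq]
    exact isWeaklyRegularModulo_top l
  | succ t ih =>
    intro i hi
    have hprefix : IsWeaklyRegularModulo N (a :: l.take i) := by
      rw [← List.take_append_drop i l, isWeaklyRegularModulo_append_iff] at h
      exact isWeaklyRegularModulo_cons_iff.mpr ⟨h.1, h.2.1⟩
    have hs := hprefix.isSMulRegular_quotient_sup_head.pow t
    have hes := ih i hi
    have her := h.2 i hi
    rw [sup_right_comm] at hes her ⊢
    rw [pow_succ]
    exact hs.quotient_sup_span_singleton_mul_smul_top hes her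

theorem mem_sup_of_prod_pow_smul_mem {l : List R} (h : IsWeaklyRegularModulo N l) (t : ℕ)
    {m : M} (hm : l.prod ^ t • m ∈ N ⊔ Ideal.ofList (l.map (· ^ (t + 1))) • ⊤) :
    m ∈ N ⊔ Ideal.ofList l • ⊤ := by
  induction l generalizing N m with
  | nil => simpa using hm
  | cons a l ih =>
    have hl := (isWeaklyRegularModulo_cons_iff.mp (h.pow_head (t + 1))).2
    rw [List.prod_cons, mul_pow, mul_smul, smul_comm, List.map_cons,
      sup_ofList_cons_smul_top] at hm
    have ham := ih hl hm
    rw [sup_right_comm, pow_succ] at ham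
    rw [sup_ofList_cons_smul_top, sup_right_comm]
    exact (h.isSMulRegular_quotient_sup_head.pow t).mem_sup_span_singleton_smul_top_of_smul_mem ham

end IsWeaklyRegularModulo

theorem RingTheory.Sequence.IsWeaklyRegular.mem_ofList_smul_top_of_prod_pow_smul_mem
    {rs : List R} (h : IsWeaklyRegular M rs) (t : ℕ) {m : M}
    (hm : rs.prod ^ t • m ∈ Ideal.ofList (rs.map (· ^ (t + 1))) • (⊤ : Submodule R M)) :
    m ∈ Ideal.ofList rs • (⊤ : Submodule R M) := by
  rw [← bot_sup_eq (Ideal.ofList rs • ⊤)]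
  rw [← bot_sup_eq (Ideal.ofList _ • ⊤)] at hm
  exact (isWeaklyRegularModulo_bot_iff.mpr h).mem_sup_of_prod_pow_smul_mem t hm

end

theorem Ideal.ofList_ofFn {R : Type*} [CommRing R] {n : ℕ} (f : Fin n → R) :
    Ideal.ofList (List.ofFn f) = Ideal.span (Set.range f) :=
  congrArg Ideal.span (Set.ext (List.mem_ofFn' f))

/-- If `x₁,…,x_d` is a regular sequence on an `R`-algebra `B`, then for every `t ≥ 1` the element
`(x₁⋯x_d)^{t−1}` does not lie in `(x₁^t,…,x_d^t)B`; i.e. the class `[1/(x₁⋯x_d)]` is nonzero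
in the top local cohomology of `B`. -/
theorem pow_prod_not_mem_span_pows {R B : Type*} [CommRing R] [CommRing B] [Algebra R B]
    {d : ℕ} (x : Fin d → R)
    (hreg : RingTheory.Sequence.IsRegular B (List.ofFn x))
    (t : ℕ) (ht : 1 ≤ t) :
    algebraMap R B ((∏ i, x i) ^ (t - 1)) ∉
      Ideal.span (Set.range fun i => algebraMap R B (x i ^ t)) := by
  intro hmem
  have hone : (1 : B) ∈ (Ideal.ofList (List.ofFn x)).map (algebraMap R B) := by
    rw [← Submodule.restrictScalars_mem R, ← Ideal.smul_top_eq_map]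
    refine hreg.toIsWeaklyRegular.mem_ofList_smul_top_of_prod_pow_smul_mem (t - 1) ?_
    rw [Nat.sub_add_cancel ht, Ideal.smul_top_eq_map, Submodule.restrictScalars_mem,
      Ideal.map_ofList, List.map_map, List.map_ofFn, Ideal.ofList_ofFn, List.prod_ofFn,
      ← Algebra.algebraMap_eq_smul_one]
    exact hmem
  apply hreg.top_ne_smul
  rw [Ideal.smul_top_eq_map, (Ideal.eq_top_iff_one _).mpr hone, Submodule.restrictScalars_top]
end

section
/- Let R → B be a homomorphism of commutative rings that is cyclically pure, i.e., IB ∩ R = I for every ideal I of R. If x₁,…,x_d ∈ R is a regular sequence on B, then x₁,…,x_d is a regular sequence on R. In particular, if (R,m) is a Noetherian local ring admitting a cyclically pure map to an R-algebra B on which some system of parameters of R is a regular sequence, then that system of parameters is a regular sequence on R. -/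
/-!
Cyclic purity says exactly that `R/I → B/IB` is injective for every ideal `I`, so a
nonzerodivisor on `B/IB` restricts to one on `R/I`; applied to `I = (x₁, …, xᵢ)` this transfers
weak regularity. The condition `R/(x)R ≠ 0` needs no purity: if `(x) = R` then `(x)B = B`.
-/

open RingTheory.Sequence

section CyclicallyPure

variable {R B : Type*} [CommRing R] [CommRing B] [Algebra R B]

theorem Ideal.injective_mapQ_algebraLinearMap_of_comap_map_le {I : Ideal R}
    (hI : (I.map (algebraMap R B)).comap (algebraMap R B) ≤ I) :
    Function.Injective ((I • ⊤ : Submodule R R).mapQ (I • ⊤) (Algebra.linearMap R B)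
      (Submodule.smul_top_le_comap_smul_top I _)) := by
  rw [← LinearMap.ker_eq_bot, Submodule.ker_mapQ, eq_bot_iff, Submodule.map_le_iff_le_comap,
    Submodule.comap_bot, Submodule.ker_mkQ, Ideal.smul_top_eq_map, Ideal.smul_eq_mul,
    Ideal.mul_top]
  exact hI

theorem IsSMulRegular.quotient_smul_top_of_comap_map_le {I : Ideal R}
    (hI : (I.map (algebraMap R B)).comap (algebraMap R B) ≤ I) {x : R}
    (hx : IsSMulRegular (B ⧸ (I • ⊤ : Submodule R B)) x) :
    IsSMulRegular (R ⧸ (I • ⊤ : Submodule R R)) x :=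
  hx.of_injective _ (Ideal.injective_mapQ_algebraLinearMap_of_comap_map_le hI)

theorem RingTheory.Sequence.IsWeaklyRegular.of_forall_comap_map_le
    (hpure : ∀ I : Ideal R, (I.map (algebraMap R B)).comap (algebraMap R B) ≤ I)
    {xs : List R} (h : IsWeaklyRegular B xs) : IsWeaklyRegular R xs :=
  ⟨fun i hi => (h.regular_mod_prev i hi).quotient_smul_top_of_comap_map_le (hpure _)⟩

theorem Ideal.ne_top_of_top_ne_smul {M : Type*} [AddCommGroup M] [Module R M] {I : Ideal R}
    (h : (⊤ : Submodule R M) ≠ I • ⊤) : I ≠ ⊤ := by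
  rintro rfl
  exact h (Submodule.top_smul _).symm

end CyclicallyPure

/-- If `R → B` is cyclically pure (`IB ∩ R = I` for every ideal `I ⊆ R`) and `x₁,…,x_d ∈ R`
is a regular sequence on `B`, then it is a regular sequence on `R`. -/
theorem isRegular_of_cyclically_pure {R B : Type*} [CommRing R] [CommRing B] [Algebra R B]
    (hpure : ∀ (I : Ideal R) (r : R), algebraMap R B r ∈ I.map (algebraMap R B) → r ∈ I)
    (xs : List R)
    (hreg : RingTheory.Sequence.IsRegular B xs) :
    RingTheory.Sequence.IsRegular R xs := by
  refine ⟨hreg.toIsWeaklyRegular.of_forall_comap_map_le fun I r => hpure I r, ?_⟩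
  rw [Ideal.smul_eq_mul, Ideal.mul_top]
  exact (Ideal.ne_top_of_top_ne_smul hreg.top_ne_smul).symm
end

section
/- Let (R, m, k) be a complete Noetherian local ring, E the injective hull of the residue field k, and B an R-algebra. If the natural map E → E ⊗_R B (given by e ↦ e ⊗ 1) is injective, then the structure map R → B is a split injection of R-modules; in particular R → B is pure. -/
open IsLocalRing TensorProduct

/-!
For complete `R`, every `R`-linear map from the `𝔪`-power torsion `⋃ₙ (0 :_E 𝔪ⁿ)` of `E` to `E`
is multiplication by a unique scalar (the half of Matlis duality that is needed). On the socle
`(0 :_E 𝔪) = k` this is clear. Multiplication by generators `t₁, …, t_d` of `𝔪ⁿ` maps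
`(0 :_E 𝔪ⁿ⁺¹)` into `(0 :_E 𝔪)ᵈ ⊆ Eᵈ` with kernel `(0 :_E 𝔪ⁿ)`, so by injectivity of `E` a map
vanishing on `(0 :_E 𝔪ⁿ)` is `x ↦ ν (t₁ x, …, t_d x)` for some `ν : Eᵈ → E`; the components of `ν`
act on the socle by scalars `aᵢ`, so the map is multiplication by `∑ aᵢ tᵢ`. Induction on `n` gives
a scalar `rₙ` on each layer. Since `E` cogenerates, the annihilator of `(0 :_E 𝔪ⁿ)` is `𝔪ⁿ`,
so the `rₙ` form a Cauchy sequence and its limit works on every layer.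

Extending the identity of `E` along `E → E ⊗ B` gives `g : E ⊗ B → E`; then
`b ↦ (x ↦ g (x ⊗ b))` is an `R`-linear map from `B` to `Hom(⋃ₙ (0 :_E 𝔪ⁿ), E) ≅ R` sending `1`
to `1`, i.e. a splitting.
-/

open Submodule

universe u v

theorem Module.Baer.exists_comp_eq_of_ker_le {R Q M N : Type*} [CommRing R] [AddCommGroup Q]
    [Module R Q] [AddCommGroup M] [Module R M] [AddCommGroup N] [Module R N]
    (hQ : Module.Baer R Q) (f : M →ₗ[R] N) (g : M →ₗ[R] Q)
    (hfg : LinearMap.ker f ≤ LinearMap.ker g) : ∃ h : N →ₗ[R] Q, h ∘ₗ f = g := by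
  obtain ⟨h, hh⟩ := hQ.extension_property ((LinearMap.ker f).liftQ f le_rfl)
    (LinearMap.ker_eq_bot.1 (ker_liftQ_eq_bot _ _ _ le_rfl)) ((LinearMap.ker f).liftQ g hfg)
  exact ⟨h, LinearMap.ext fun x => by simpa using LinearMap.congr_fun hh (Submodule.Quotient.mk x)⟩

section Small

variable {R : Type u} [CommRing R] [IsNoetherianRing R] (I : Ideal R)

theorem small_quotient_pow_succ (n : ℕ) [Small.{v} (R ⧸ I)] [Small.{v} (R ⧸ I ^ n)] :
    Small.{v} (R ⧸ I ^ (n + 1)) := by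
  obtain ⟨d, t, ht⟩ := fg_iff_exists_fin_generating_family.1 (IsNoetherian.noetherian (I ^ n))
  refine small_of_surjective (f := fun p : (R ⧸ I ^ n) × (Fin d → R ⧸ I) =>
    Ideal.Quotient.mk (I ^ (n + 1)) (p.1.out + ∑ i, (p.2 i).out * t i)) fun y => ?_
  obtain ⟨r, rfl⟩ := Ideal.Quotient.mk_surjective y
  have hr : r - (Ideal.Quotient.mk (I ^ n) r).out ∈ span R (Set.range t) := by
    rw [ht, ← Ideal.Quotient.eq, Ideal.Quotient.mk_out]
  obtain ⟨c, hc⟩ := (mem_span_range_iff_exists_fun R).1 hr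
  refine ⟨(Ideal.Quotient.mk _ r, fun i => Ideal.Quotient.mk I (c i)), Ideal.Quotient.eq.2 ?_⟩
  have hdiff : (Ideal.Quotient.mk (I ^ n) r).out + ∑ i, (Ideal.Quotient.mk I (c i)).out * t i - r =
      ∑ i, ((Ideal.Quotient.mk I (c i)).out - c i) * t i := by
    simp only [sub_mul, Finset.sum_sub_distrib, ← smul_eq_mul (a := c _), hc]
    ring
  rw [hdiff, pow_succ']
  refine Ideal.sum_mem _ fun i _ => Ideal.mul_mem_mul ?_ (ht ▸ subset_span ⟨i, rfl⟩)
  rw [← Ideal.Quotient.eq, Ideal.Quotient.mk_out]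

theorem small_of_isHausdorff [IsHausdorff I R] [Small.{v} (R ⧸ I)] : Small.{v} R := by
  have hpow (n : ℕ) : Small.{v} (R ⧸ I ^ n) := by
    induction n with
    | zero =>
      have : Subsingleton (R ⧸ I ^ 0) :=
        Ideal.Quotient.subsingleton_iff.2 (pow_zero I ▸ Ideal.one_eq_top)
      infer_instance
    | succ n ih => exact small_quotient_pow_succ I n
  refine small_of_injective (f := fun r (n : ℕ) => Ideal.Quotient.mk (I ^ n) r) fun r r' h => ?_
  refine sub_eq_zero.1 <| IsHausdorff.haus' (I := I) (r - r') fun n => ?_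
  rw [SModEq.zero, smul_eq_mul, Ideal.mul_top, ← Ideal.Quotient.eq]
  exact congr_fun h n

end Small

section InjectiveHull

variable {R : Type u} [CommRing R] [IsLocalRing R] {E : Type v} [AddCommGroup E] [Module R E]
  {ι : ResidueField R →ₗ[R] E}

theorem IsLocalRing.ResidueField.smul_eq_zero_of_mem_maximalIdeal {a : R}
    (ha : a ∈ maximalIdeal R) (x : ResidueField R) : a • x = 0 := by
  rw [Algebra.smul_def, ResidueField.algebraMap_eq, (residue_eq_zero_iff a).2 ha, zero_mul]

theorem Module.Baer.exists_apply_ne_zero (hE : Module.Baer R E) (hι : Function.Injective ι)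
    {M : Type*} [AddCommGroup M] [Module R M] {x : M} (hx : x ≠ 0) :
    ∃ φ : M →ₗ[R] E, φ x ≠ 0 := by
  have hker : LinearMap.ker (LinearMap.toSpanSingleton R M x) ≤
      LinearMap.ker (LinearMap.toSpanSingleton R E (ι 1)) := fun a ha => by
    have ha : a ∈ maximalIdeal R := fun hunit => hx <| by
      simpa [hunit.smul_eq_zero] using ha
    simp [← map_smul, ResidueField.smul_eq_zero_of_mem_maximalIdeal ha]
  obtain ⟨φ, hφ⟩ := hE.exists_comp_eq_of_ker_le _ _ hker
  refine ⟨φ, fun h => one_ne_zero (hι ?_)⟩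
  simpa [h] using (LinearMap.congr_fun hφ 1).symm

theorem torsionBySet_maximalIdeal_le_range
    (hess : ∀ N : Submodule R E, N ≠ ⊥ → N ⊓ LinearMap.range ι ≠ ⊥) :
    torsionBySet R E ↑(maximalIdeal R) ≤ LinearMap.range ι := by
  intro x hx
  by_cases hx0 : x = 0
  · exact hx0 ▸ zero_mem _
  obtain ⟨y, ⟨hyx, hyι⟩, hy0⟩ := (Submodule.ne_bot_iff _).1 <|
    hess (R ∙ x) (by simpa [span_singleton_eq_bot] using hx0)
  obtain ⟨a, rfl⟩ := mem_span_singleton.1 hyx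
  have ha : IsUnit a := by
    by_contra ha
    exact hy0 ((mem_torsionBySet_iff _ _).1 hx ⟨a, (mem_maximalIdeal a).2 ha⟩)
  exact ((LinearMap.range ι).smul_mem_iff' ha.unit).1 hyι

theorem range_le_torsionBySet_maximalIdeal :
    LinearMap.range ι ≤ torsionBySet R E ↑(maximalIdeal R) := by
  rintro _ ⟨c, rfl⟩
  exact (mem_torsionBySet_iff _ _).2 fun ⟨a, ha⟩ => by
    rw [← map_smul, ResidueField.smul_eq_zero_of_mem_maximalIdeal ha, map_zero]

theorem torsionBySet_maximalIdeal_eq_range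
    (hess : ∀ N : Submodule R E, N ≠ ⊥ → N ⊓ LinearMap.range ι ≠ ⊥) :
    torsionBySet R E ↑(maximalIdeal R) = LinearMap.range ι :=
  le_antisymm (torsionBySet_maximalIdeal_le_range hess) range_le_torsionBySet_maximalIdeal

theorem exists_eq_smul_subtype_torsionBySet_maximalIdeal
    (hess : ∀ N : Submodule R E, N ≠ ⊥ → N ⊓ LinearMap.range ι ≠ ⊥)
    (f : torsionBySet R E ↑(maximalIdeal R) →ₗ[R] E) :
    ∃ a : R, f = a • (torsionBySet R E ↑(maximalIdeal R)).subtype := by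
  have hres (b : R) : ι (residue R b) = b • ι 1 := by
    rw [← map_smul, Algebra.smul_def, mul_one, ResidueField.algebraMap_eq]
  have hι1 : ι 1 ∈ torsionBySet R E ↑(maximalIdeal R) :=
    range_le_torsionBySet_maximalIdeal ⟨1, rfl⟩
  have hf1 : f ⟨ι 1, hι1⟩ ∈ LinearMap.range ι := by
    rw [← torsionBySet_maximalIdeal_eq_range hess]
    exact (mem_torsionBySet_iff _ _).2 fun a => by
      rw [← map_smul, torsionBySet_isTorsionBySet, map_zero]
  obtain ⟨c, hc⟩ := hf1
  obtain ⟨a, rfl⟩ := residue_surjective c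
  refine ⟨a, LinearMap.ext fun ⟨x, hx⟩ => ?_⟩
  obtain ⟨c', rfl⟩ := torsionBySet_maximalIdeal_eq_range hess ▸ hx
  obtain ⟨b, rfl⟩ := residue_surjective c'
  have hx1 : (⟨ι (residue R b), hx⟩ : torsionBySet R E ↑(maximalIdeal R)) = b • ⟨ι 1, hι1⟩ :=
    Subtype.ext (hres b)
  calc f ⟨ι (residue R b), hx⟩ = b • f ⟨ι 1, hι1⟩ := by rw [hx1, map_smul]
    _ = a • ι (residue R b) := by rw [← hc, hres, hres, smul_comm]

theorem annihilator_torsionBySet_maximalIdeal_pow (hE : Module.Baer R E)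
    (hι : Function.Injective ι) (n : ℕ) :
    (torsionBySet R E ↑(maximalIdeal R ^ n)).annihilator = maximalIdeal R ^ n := by
  refine le_antisymm (fun r hr => ?_) fun a ha => mem_annihilator.2 fun x hx =>
    (mem_torsionBySet_iff _ _).1 hx ⟨a, ha⟩
  by_contra hrn
  obtain ⟨φ, hφ⟩ := hE.exists_apply_ne_zero hι
    (x := Ideal.Quotient.mk (maximalIdeal R ^ n) r)
    (by rwa [ne_eq, Ideal.Quotient.eq_zero_iff_mem])
  have hφ1 : φ 1 ∈ torsionBySet R E ↑(maximalIdeal R ^ n) :=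
    (mem_torsionBySet_iff _ _).2 fun ⟨a, ha⟩ => by
      rw [← map_smul, Algebra.smul_def, mul_one, Ideal.Quotient.algebraMap_eq,
        Ideal.Quotient.eq_zero_iff_mem.2 ha, map_zero]
  refine hφ ?_
  rw [← Ideal.Quotient.algebraMap_eq, Algebra.algebraMap_eq_smul_one, map_smul]
  exact mem_annihilator.1 hr _ hφ1

theorem exists_eq_smul_subtype_torsionBySet_pow_succ [IsNoetherianRing R] (hE : Module.Baer R E)
    (hess : ∀ N : Submodule R E, N ≠ ⊥ → N ⊓ LinearMap.range ι ≠ ⊥) (n : ℕ)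
    (g : torsionBySet R E ↑(maximalIdeal R ^ (n + 1)) →ₗ[R] E)
    (hg : g ∘ₗ inclusion (torsionBySet_le_torsionBySet_pow n (n + 1) n.le_succ _) = 0) :
    ∃ a : R, g = a • (torsionBySet R E ↑(maximalIdeal R ^ (n + 1))).subtype := by
  let T := torsionBySet R E ↑(maximalIdeal R ^ (n + 1))
  obtain ⟨d, t, ht⟩ := fg_iff_exists_fin_generating_family.1
    (IsNoetherian.noetherian (maximalIdeal R ^ n))
  let Θ : T →ₗ[R] Fin d → E := LinearMap.pi fun i => t i • T.subtype
  have hker : LinearMap.ker Θ ≤ LinearMap.ker g := fun x hx => by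
    have hxn : (x : E) ∈ torsionBySet R E ↑(maximalIdeal R ^ n) := by
      rw [← ht, ← torsionBySet_eq_torsionBySet_span, mem_torsionBySet_iff]
      rintro ⟨_, i, rfl⟩
      exact congr_fun hx i
    exact LinearMap.congr_fun hg ⟨x, hxn⟩
  obtain ⟨ν, hν⟩ := hE.exists_comp_eq_of_ker_le Θ g hker
  have htT (i : Fin d) (x : T) : t i • (x : E) ∈ torsionBySet R E ↑(maximalIdeal R) :=
    (mem_torsionBySet_iff _ _).2 fun ⟨b, hb⟩ => by
      rw [smul_smul]
      refine (mem_torsionBySet_iff _ _).1 x.2 ⟨b * t i, ?_⟩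
      rw [pow_succ']
      exact Ideal.mul_mem_mul hb (ht ▸ subset_span ⟨i, rfl⟩)
  choose a ha using fun i => exists_eq_smul_subtype_torsionBySet_maximalIdeal hess
    (ν ∘ₗ LinearMap.single R (fun _ => E) i ∘ₗ (torsionBySet R E ↑(maximalIdeal R)).subtype)
  refine ⟨∑ i, a i * t i, LinearMap.ext fun x => ?_⟩
  calc g x = ν (∑ i, Pi.single i (t i • (x : E))) := by
        rw [Finset.univ_sum_single, ← hν]; rfl
    _ = ∑ i, a i • t i • (x : E) := by
        simp only [map_sum]
        refine Finset.sum_congr rfl fun i _ => ?_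
        simpa using LinearMap.congr_fun (ha i) ⟨_, htT i x⟩
    _ = (∑ i, a i * t i) • (x : E) := by simp only [Finset.sum_smul, smul_smul]

theorem exists_eq_smul_subtype_torsionBySet_pow [IsNoetherianRing R] (hE : Module.Baer R E)
    (hess : ∀ N : Submodule R E, N ≠ ⊥ → N ⊓ LinearMap.range ι ≠ ⊥) (n : ℕ)
    (f : torsionBySet R E ↑(maximalIdeal R ^ n) →ₗ[R] E) :
    ∃ a : R, f = a • (torsionBySet R E ↑(maximalIdeal R ^ n)).subtype := by
  induction n with
  | zero =>
    have : Subsingleton (torsionBySet R E ↑(maximalIdeal R ^ 0)) := by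
      rw [pow_zero, Ideal.one_eq_top, top_coe, torsionBySet_univ]
      infer_instance
    exact ⟨0, Subsingleton.elim _ _⟩
  | succ n ih =>
    obtain ⟨r, hr⟩ := ih (f ∘ₗ inclusion (torsionBySet_le_torsionBySet_pow n (n + 1) n.le_succ _))
    obtain ⟨a, ha⟩ := exists_eq_smul_subtype_torsionBySet_pow_succ hE hess n
      (f - r • (torsionBySet R E ↑(maximalIdeal R ^ (n + 1))).subtype)
      (by rw [LinearMap.sub_comp, hr, LinearMap.smul_comp, subtype_comp_inclusion, sub_self])
    exact ⟨r + a, by rw [add_smul, ← ha, add_sub_cancel]⟩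

variable (R E) in
def maximalIdealPowTorsion : Submodule R E := ⨆ n : ℕ, torsionBySet R E ↑(maximalIdeal R ^ n)

theorem torsionBySet_le_maximalIdealPowTorsion (n : ℕ) :
    torsionBySet R E ↑(maximalIdeal R ^ n) ≤ maximalIdealPowTorsion R E :=
  le_iSup (fun n => torsionBySet R E ↑(maximalIdeal R ^ n)) n

theorem mem_maximalIdealPowTorsion {x : E} :
    x ∈ maximalIdealPowTorsion R E ↔ ∃ n, x ∈ torsionBySet R E ↑(maximalIdeal R ^ n) :=
  mem_iSup_of_directed _
    (Monotone.directed_le fun m n h => torsionBySet_le_torsionBySet_pow m n h _)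

theorem injective_toSpanSingleton_subtype_maximalIdealPowTorsion [IsNoetherianRing R]
    (hE : Module.Baer R E) (hι : Function.Injective ι) :
    Function.Injective (LinearMap.toSpanSingleton R _ (maximalIdealPowTorsion R E).subtype) := by
  refine (injective_iff_map_eq_zero _).2 fun r hr => ?_
  have hr (n : ℕ) : r ∈ maximalIdeal R ^ n := by
    rw [← annihilator_torsionBySet_maximalIdeal_pow hE hι n, mem_annihilator]
    exact fun x hx => LinearMap.congr_fun hr ⟨x, torsionBySet_le_maximalIdealPowTorsion n hx⟩
  rw [← Ideal.mem_bot, ← Ideal.iInf_pow_eq_bot_of_isLocalRing _ (maximalIdeal.isMaximal R).ne_top]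
  exact Ideal.mem_iInf.2 hr

theorem surjective_toSpanSingleton_subtype_maximalIdealPowTorsion [IsNoetherianRing R]
    [IsPrecomplete (maximalIdeal R) R] (hE : Module.Baer R E) (hι : Function.Injective ι)
    (hess : ∀ N : Submodule R E, N ≠ ⊥ → N ⊓ LinearMap.range ι ≠ ⊥) :
    Function.Surjective (LinearMap.toSpanSingleton R _ (maximalIdealPowTorsion R E).subtype) := by
  intro φ
  choose r hr using fun n => exists_eq_smul_subtype_torsionBySet_pow hE hess n
    (φ ∘ₗ inclusion (torsionBySet_le_maximalIdealPowTorsion n))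
  have hφ {n : ℕ} {x : E} (hx : x ∈ torsionBySet R E ↑(maximalIdeal R ^ n)) :
      φ ⟨x, torsionBySet_le_maximalIdealPowTorsion n hx⟩ = r n • x :=
    LinearMap.congr_fun (hr n) ⟨x, hx⟩
  have hsub {m n : ℕ} (hmn : m ≤ n) : r m - r n ∈ maximalIdeal R ^ m := by
    rw [← annihilator_torsionBySet_maximalIdeal_pow hE hι m, mem_annihilator]
    intro x hx
    rw [sub_smul, ← hφ hx, ← hφ (torsionBySet_le_torsionBySet_pow m n hmn _ hx), sub_self]
  obtain ⟨L, hL⟩ := IsPrecomplete.prec ‹_› (f := r) fun hmn => by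
    rw [SModEq.sub_mem, smul_eq_mul, Ideal.mul_top]
    exact hsub hmn
  refine ⟨L, LinearMap.ext fun ⟨x, hx⟩ => ?_⟩
  obtain ⟨n, hxn⟩ := mem_maximalIdealPowTorsion.1 hx
  have hLn : r n - L ∈ maximalIdeal R ^ n := by
    simpa only [SModEq.sub_mem, smul_eq_mul, Ideal.mul_top] using hL n
  rw [LinearMap.toSpanSingleton_apply, LinearMap.smul_apply, subtype_apply, hφ hxn,
    eq_comm, ← sub_eq_zero, ← sub_smul]
  exact (mem_torsionBySet_iff _ _).1 hxn ⟨_, hLn⟩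

end InjectiveHull

/-- Over a complete Noetherian local ring `(R, m, k)` with `E` the injective hull of `k` and
`B` an `R`-algebra, if `E → E ⊗_R B`, `e ↦ e ⊗ 1`, is injective then `R → B` splits as a map
of `R`-modules. -/
theorem splits_of_injective_hull_tensor_injective
    {R : Type*} [CommRing R] [IsLocalRing R] [IsNoetherianRing R]
    [IsAdicComplete (maximalIdeal R) R]
    {E : Type*} [AddCommGroup E] [Module R E] [Module.Injective R E]
    (ι : ResidueField R →ₗ[R] E) (hι : Function.Injective ι)
    (hess : ∀ N : Submodule R E, N ≠ ⊥ → N ⊓ LinearMap.range ι ≠ ⊥)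
    {B : Type*} [CommRing B] [Algebra R B]
    (hinj : Function.Injective ((TensorProduct.mk R E B).flip 1)) :
    ∃ s : B →ₗ[R] R, s ∘ₗ Algebra.linearMap R B = LinearMap.id := by
  -- `Module.Injective R E` only tests modules in the universe of `E`; Baer's criterion, needed
  -- for `E ⊗ B`, follows from it once `R` is small there.
  have : Small (R ⧸ maximalIdeal R) := small_of_injective hι
  have := small_of_isHausdorff (maximalIdeal R)
  have hE : Module.Baer R E := Module.Baer.of_injective ‹_›
  obtain ⟨g, hg⟩ := hE.extension_property _ hinj LinearMap.id
  let e := LinearEquiv.ofBijective _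
    ⟨injective_toSpanSingleton_subtype_maximalIdealPowTorsion hE hι,
      surjective_toSpanSingleton_subtype_maximalIdealPowTorsion hE hι hess⟩
  let Ψ : B →ₗ[R] maximalIdealPowTorsion R E →ₗ[R] E :=
    ((TensorProduct.mk R E B).flip.compr₂ g).compl₂ (maximalIdealPowTorsion R E).subtype
  have hΨ : Ψ 1 = (maximalIdealPowTorsion R E).subtype := LinearMap.ext fun x => by
    simpa [Ψ] using LinearMap.congr_fun hg x
  refine ⟨e.symm ∘ₗ Ψ, LinearMap.ext_ring ?_⟩
  rw [LinearMap.comp_apply, LinearMap.comp_apply, Algebra.linearMap_apply, map_one, hΨ,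
    LinearEquiv.coe_coe, LinearEquiv.symm_apply_eq]
  exact (one_smul R _).symm
end
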